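/- Let p_0, p_1, ..., p_k and q_0, q_1, ..., q_k be two sequences of probability mass functions on finite sets Z_0, Z_1, ..., Z_k such that for each i ≥ 1 there is a shared CPT P_i from Z_{i-1} to Z_i with p_i(z) = Σ_{z'} p_{i-1}(z') (P_i)_{z'}(z) and q_i(z) = Σ_{z'} q_{i-1}(z') (P_i)_{z'}(z). Then d_V(p_k, q_k) ≤ (∏_{i=1}^k d⁺(P_i)) · d_V(p_0, q_0). -/

import Mathlib

/-!
If `p` and `q` have the same total mass, write `p - q = a - b` with `a = (p - q)⁺` and
`b = (p - q)⁻`; both have mass `S = d_V(p, q)`. Then `S • (p - q) P = ∑_{x,x'} a x b x' (P x - P x')`,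
and each `P x - P x'` has half-`L¹`-norm at most `d⁺(P)`, so one transition contracts `d_V`
by the factor `d⁺(P)`. Transitions whose rows sum to one preserve total mass, so induction
along the path gives the product of the diameters.
-/

noncomputable def dV {Z : Type*} [Fintype Z] (p q : Z → ℝ) : ℝ :=
  (1/2) * ∑ z, |p z - q z|

def IsPMF {Z : Type*} [Fintype Z] (p : Z → ℝ) : Prop :=
  (∀ z, 0 ≤ p z) ∧ ∑ z, p z = 1

noncomputable def diam {X Y : Type*} [Fintype X] [Fintype Y]
    (P : X → Y → ℝ) : ℝ :=
  ⨆ x : X, ⨆ x' : X, dV (P x) (P x')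

open Finset

section TotalVariation

variable {X Y : Type*} [Fintype X] [Fintype Y]

lemma dV_nonneg (p q : X → ℝ) : 0 ≤ dV p q := by
  unfold dV; positivity

lemma dV_self (p : X → ℝ) : dV p p = 0 := by
  simp [dV]

lemma eq_of_dV_eq_zero {p q : X → ℝ} (h : dV p q = 0) : p = q := by
  have hsum : ∑ x, |p x - q x| = 0 := by unfold dV at h; linarith
  funext x
  exact sub_eq_zero.mp <| abs_eq_zero.mp <|
    (sum_eq_zero_iff_of_nonneg fun x _ => abs_nonneg (p x - q x)).mp hsum x (mem_univ x)

lemma dV_le_diam (P : X → Y → ℝ) (x x' : X) : dV (P x) (P x') ≤ diam P :=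
  (le_ciSup (Set.finite_range _).bddAbove x').trans
    (le_ciSup (f := fun x => ⨆ x', dV (P x) (P x')) (Set.finite_range _).bddAbove x)

lemma diam_nonneg (P : X → Y → ℝ) : 0 ≤ diam P :=
  Real.iSup_nonneg fun _ => Real.iSup_nonneg fun _ => dV_nonneg _ _

lemma sum_posPart_sub_eq_dV_and_sum_negPart_sub_eq_dV {p q : X → ℝ}
    (hs : ∑ x, p x = ∑ x, q x) :
    ∑ x, (p x - q x)⁺ = dV p q ∧ ∑ x, (p x - q x)⁻ = dV p q := by
  have hdiff : ∑ x, (p x - q x)⁺ - ∑ x, (p x - q x)⁻ = 0 := by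
    rw [← sum_sub_distrib]
    simp only [posPart_sub_negPart]
    rw [sum_sub_distrib, hs, sub_self]
  have htot : ∑ x, (p x - q x)⁺ + ∑ x, (p x - q x)⁻ = 2 * dV p q := by
    rw [← sum_add_distrib]
    simp only [posPart_add_negPart, dV]
    ring
  constructor <;> linarith

lemma sum_mul_sum_sub_sum_mul_sum (a b g : X → ℝ) :
    (∑ x, b x) * ∑ x, a x * g x - (∑ x, a x) * ∑ x, b x * g x
      = ∑ x, ∑ x', a x * b x' * (g x - g x') := by
  simp only [mul_comm (∑ x, b x), sum_mul_sum, ← sum_sub_distrib]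
  exact sum_congr rfl fun _ _ => sum_congr rfl fun _ _ => by ring

lemma sum_comp_eq_sum (p : X → ℝ) {P : X → Y → ℝ} (hP : ∀ x, ∑ y, P x y = 1) :
    ∑ y, ∑ x, p x * P x y = ∑ x, p x := by
  rw [sum_comm]
  simp only [← mul_sum, hP, mul_one]

lemma mul_dV_comp_le_sum_mul_dV (p q : X → ℝ) (P : X → Y → ℝ) (hs : ∑ x, p x = ∑ x, q x) :
    dV p q * dV (fun y => ∑ x, p x * P x y) (fun y => ∑ x, q x * P x y)
      ≤ ∑ x, ∑ x', (p x - q x)⁺ * (p x' - q x')⁻ * dV (P x) (P x') := by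
  obtain ⟨ha, hb⟩ := sum_posPart_sub_eq_dV_and_sum_negPart_sub_eq_dV hs
  have hcoupling : ∀ y, dV p q * ((∑ x, p x * P x y) - ∑ x, q x * P x y)
      = ∑ x, ∑ x', (p x - q x)⁺ * (p x' - q x')⁻ * (P x y - P x' y) := by
    intro y
    rw [← sum_mul_sum_sub_sum_mul_sum, ha, hb, ← mul_sub, ← sum_sub_distrib, ← sum_sub_distrib]
    congr 1
    exact sum_congr rfl fun x _ => by rw [← sub_mul, ← sub_mul, posPart_sub_negPart]
  calc dV p q * dV (fun y => ∑ x, p x * P x y) (fun y => ∑ x, q x * P x y)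
      = (1/2) * ∑ y, |∑ x, ∑ x', (p x - q x)⁺ * (p x' - q x')⁻ * (P x y - P x' y)| := by
        simp only [← hcoupling, abs_mul, abs_of_nonneg (dV_nonneg p q), ← mul_sum]
        unfold dV
        ring
    _ ≤ (1/2) * ∑ y, ∑ x, ∑ x', (p x - q x)⁺ * (p x' - q x')⁻ * |P x y - P x' y| := by
        gcongr with y
        refine (abs_sum_le_sum_abs _ _).trans (sum_le_sum fun x _ => ?_)
        refine (abs_sum_le_sum_abs _ _).trans (sum_le_sum fun x' _ => ?_)
        rw [abs_mul, abs_of_nonneg (mul_nonneg (posPart_nonneg _) (negPart_nonneg _))]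
    _ = ∑ x, ∑ x', (p x - q x)⁺ * (p x' - q x')⁻ * dV (P x) (P x') := by
        simp only [dV, mul_sum]
        rw [sum_comm]
        refine sum_congr rfl fun x _ => ?_
        rw [sum_comm]
        exact sum_congr rfl fun x' _ => sum_congr rfl fun y _ => by ring

lemma dV_comp_le (p q : X → ℝ) (P : X → Y → ℝ) (hs : ∑ x, p x = ∑ x, q x) :
    dV (fun y => ∑ x, p x * P x y) (fun y => ∑ x, q x * P x y) ≤ diam P * dV p q := by
  rcases (dV_nonneg p q).eq_or_lt with hzero | hpos
  · rw [eq_of_dV_eq_zero hzero.symm, dV_self, dV_self, mul_zero]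
  obtain ⟨ha, hb⟩ := sum_posPart_sub_eq_dV_and_sum_negPart_sub_eq_dV hs
  refine le_of_mul_le_mul_left ?_ hpos
  calc dV p q * dV (fun y => ∑ x, p x * P x y) (fun y => ∑ x, q x * P x y)
      ≤ ∑ x, ∑ x', (p x - q x)⁺ * (p x' - q x')⁻ * dV (P x) (P x') :=
        mul_dV_comp_le_sum_mul_dV p q P hs
    _ ≤ ∑ x, ∑ x', (p x - q x)⁺ * (p x' - q x')⁻ * diam P := by
        gcongr with x _ x' _
        exact dV_le_diam P x x'
    _ = dV p q * (diam P * dV p q) := by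
        simp only [← sum_mul, ← sum_mul_sum, ha, hb]
        ring

end TotalVariation

theorem stmt10_general (k : ℕ) (Z : ℕ → Type*) [∀ i, Fintype (Z i)]
    (p q : (i : ℕ) → Z i → ℝ)
    (P : (i : ℕ) → Z i → Z (i + 1) → ℝ)
    (hP : ∀ i z, IsPMF (P i z))
    (hp0 : IsPMF (p 0)) (hq0 : IsPMF (q 0))
    (hp : ∀ i, p (i + 1) = fun z => ∑ z', p i z' * P i z' z)
    (hq : ∀ i, q (i + 1) = fun z => ∑ z', q i z' * P i z' z) :
    dV (p k) (q k) ≤ (∏ i ∈ Finset.range k, diam (P i)) * dV (p 0) (q 0) := by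
  have hmass : ∀ i, ∑ z, p i z = ∑ z, q i z := by
    intro i
    induction i with
    | zero => rw [hp0.2, hq0.2]
    | succ i ih =>
      rw [hp i, hq i, sum_comp_eq_sum _ fun z => (hP i z).2, sum_comp_eq_sum _ fun z => (hP i z).2,
        ih]
  induction k with
  | zero => simp
  | succ k ih =>
    calc dV (p (k + 1)) (q (k + 1)) ≤ diam (P k) * dV (p k) (q k) := by
          rw [hp k, hq k]
          exact dV_comp_le _ _ _ (hmass k)
      _ ≤ diam (P k) * ((∏ i ∈ range k, diam (P i)) * dV (p 0) (q 0)) := by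
          gcongr
          exact diam_nonneg _
      _ = (∏ i ∈ range (k + 1), diam (P i)) * dV (p 0) (q 0) := by
          rw [prod_range_succ]
          ring

theorem stmt10 (k : ℕ) (Z : ℕ → Type*) [∀ i, Fintype (Z i)] [∀ i, Nonempty (Z i)]
    (p q : (i : ℕ) → Z i → ℝ)
    (P : (i : ℕ) → Z i → Z (i + 1) → ℝ)
    (hP : ∀ i z, IsPMF (P i z))
    (hp0 : IsPMF (p 0)) (hq0 : IsPMF (q 0))
    (hp : ∀ i, p (i + 1) = fun z => ∑ z', p i z' * P i z' z)
    (hq : ∀ i, q (i + 1) = fun z => ∑ z', q i z' * P i z' z) :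
    dV (p k) (q k) ≤ (∏ i ∈ Finset.range k, diam (P i)) * dV (p 0) (q 0) :=
  stmt10_general k Z p q P hP hp0 hq0 hp hq
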